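/- arXiv:2605.30903 — 6 statements merged into one kernel-verified Lean document; each statement's English description precedes it below -/
import Mathlib

section
/- Let Φ ⊆ ℝ^n be nonempty and compact, define subopt(r,d) := max_{d'∈Φ}⟨r,d'⟩ − ⟨r,d⟩, and for demonstrators (d_k, ε_k)_{k=1}^K with d_k ∈ Φ define the feasible set R(D) := {r ∈ Δ : subopt(r,d_k) ≤ ε_k for all k}, where Δ := {r ∈ ℝ^n : r ≥ 0, ∑_i r_i = 1}. Then for every r ∈ R(D), every point d_e* ∈ Φ, and every convex combination (d, ε) = (∑λ_k d_k, ∑λ_k ε_k), we have subopt(r, d_e*) ≤ ‖d − d_e*‖₁ + ε. Consequently sup_{r∈R(D)} subopt(r, d_e*) ≤ min over the convex hull of {(d_k, ε_k)} of (‖d − d_e*‖₁ + ε). -/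
open scoped BigOperators

noncomputable def dot {n : ℕ} (r d : Fin n → ℝ) : ℝ := ∑ i, r i * d i

noncomputable def subopt {n : ℕ} (Φ : Set (Fin n → ℝ)) (r d : Fin n → ℝ) : ℝ :=
  sSup ((fun dp => dot r dp) '' Φ) - dot r d

noncomputable def l1norm {n : ℕ} (x : Fin n → ℝ) : ℝ := ∑ i, |x i|

def simplex (n : ℕ) : Set (Fin n → ℝ) := {r | (∀ i, 0 ≤ r i) ∧ ∑ i, r i = 1}

def feasible {n K : ℕ} (Φ : Set (Fin n → ℝ)) (dk : Fin K → Fin n → ℝ)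
    (εk : Fin K → ℝ) : Set (Fin n → ℝ) :=
  {r ∈ simplex n | ∀ k, subopt Φ r (dk k) ≤ εk k}

lemma main_bound {n K : ℕ} (Φ : Set (Fin n → ℝ))
    (dk : Fin K → Fin n → ℝ) (εk : Fin K → ℝ)
    (destar : Fin n → ℝ) :
    ∀ r ∈ feasible Φ dk εk, ∀ lam : Fin K → ℝ,
        (∀ k, 0 ≤ lam k) → ∑ k, lam k = 1 →
        subopt Φ r destar ≤ l1norm ((∑ k, lam k • dk k) - destar) + ∑ k, lam k * εk k := by
  intro r hr lam hlam hsum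
  obtain ⟨⟨hrpos, hrsum⟩, hfk⟩ := hr
  set M := sSup ((fun dp => dot r dp) '' Φ) with hM
  set d : Fin n → ℝ := ∑ k, lam k • dk k with hd
  have hlin : dot r d = ∑ k, lam k * dot r (dk k) := by
    simp only [dot, hd, Finset.sum_apply, Pi.smul_apply, smul_eq_mul, Finset.mul_sum]
    rw [Finset.sum_comm]
    exact Finset.sum_congr rfl fun k _ => Finset.sum_congr rfl fun i _ => by ring
  have hkey : M - dot r d ≤ ∑ k, lam k * εk k := by
    have h2 : ∑ k, lam k * (M - dot r (dk k)) ≤ ∑ k, lam k * εk k :=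
      Finset.sum_le_sum fun k _ => mul_le_mul_of_nonneg_left (hfk k) (hlam k)
    have h3 : ∑ k, lam k * (M - dot r (dk k)) = M - dot r d := by
      have e : ∑ k, lam k * (M - dot r (dk k))
          = (∑ k, lam k) * M - ∑ k, lam k * dot r (dk k) := by
        rw [Finset.sum_mul, ← Finset.sum_sub_distrib]
        exact Finset.sum_congr rfl fun k _ => by ring
      rw [e, hlin, hsum]; ring
    linarith [h3 ▸ h2]
  have hri1 : ∀ i, r i ≤ 1 := by
    intro i
    calc r i ≤ ∑ j, r j := Finset.single_le_sum (fun j _ => hrpos j) (Finset.mem_univ i)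
    _ = 1 := hrsum
  have hdot : dot r d - dot r destar ≤ l1norm (d - destar) := by
    have : dot r d - dot r destar = ∑ i, r i * (d i - destar i) := by
      simp only [dot, ← Finset.sum_sub_distrib]
      exact Finset.sum_congr rfl fun i _ => by ring
    rw [this, l1norm]
    refine Finset.sum_le_sum fun i _ => ?_
    calc r i * (d i - destar i) ≤ r i * |d i - destar i| :=
          mul_le_mul_of_nonneg_left (le_abs_self _) (hrpos i)
      _ ≤ 1 * |d i - destar i| := mul_le_mul_of_nonneg_right (hri1 i) (abs_nonneg _)
      _ = |(d - destar) i| := by simp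
  have : subopt Φ r destar = (M - dot r d) + (dot r d - dot r destar) := by
    simp only [subopt, ← hM]; ring
  rw [this]
  linarith

theorem stmt_2 {n K : ℕ} (Φ : Set (Fin n → ℝ)) (hne : Φ.Nonempty) (hc : IsCompact Φ)
    (dk : Fin K → Fin n → ℝ) (εk : Fin K → ℝ) (hε : ∀ k, 0 ≤ εk k) (hmem : ∀ k, dk k ∈ Φ)
    (destar : Fin n → ℝ) (hstar : destar ∈ Φ) :
    (∀ r ∈ feasible Φ dk εk, ∀ lam : Fin K → ℝ,
        (∀ k, 0 ≤ lam k) → ∑ k, lam k = 1 →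
        subopt Φ r destar ≤ l1norm ((∑ k, lam k • dk k) - destar) + ∑ k, lam k * εk k) ∧
    (∀ lam : Fin K → ℝ, (∀ k, 0 ≤ lam k) → ∑ k, lam k = 1 →
        sSup ((fun r => subopt Φ r destar) '' feasible Φ dk εk)
          ≤ l1norm ((∑ k, lam k • dk k) - destar) + ∑ k, lam k * εk k) := by
  refine ⟨main_bound Φ dk εk destar, ?_⟩
  intro lam hlam hsum
  have hnn : 0 ≤ l1norm ((∑ k, lam k • dk k) - destar) + ∑ k, lam k * εk k := by
    have h1 : 0 ≤ l1norm ((∑ k, lam k • dk k) - destar) :=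
      Finset.sum_nonneg fun i _ => abs_nonneg _
    have h2 : 0 ≤ ∑ k, lam k * εk k :=
      Finset.sum_nonneg fun k _ => mul_nonneg (hlam k) (hε k)
    linarith
  refine Real.sSup_le ?_ hnn
  rintro x ⟨r, hr, rfl⟩
  exact main_bound Φ dk εk destar r hr lam hlam hsum
end

section
/- Let Φ ⊆ ℝ^n be nonempty and compact and subopt(r,d) := max_{d'∈Φ}⟨r,d'⟩ − ⟨r,d⟩. Suppose r' ∈ ℝ^n and d_e* ∈ Φ satisfy subopt(r', d_e*) = 0 (d_e* is optimal under r'). Let r̃ ∈ ℝ^n, d_k ∈ Φ, ε_k ≥ 0, δ ≥ 0, and assume: (i) subopt(r̃, d_e*) > δ; (ii) ⟨r̃ − r', d_e* − d_k⟩ ≥ 0; (iii) ε_k − δ ≤ subopt(r', d_k) ≤ ε_k. Then subopt(r̃, d_k) > ε_k. -/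
open scoped BigOperators

lemma dot_expand {n : ℕ} (rt r' destar dk : Fin n → ℝ) :
    dot (rt - r') (destar - dk) =
      dot rt destar - dot rt dk - dot r' destar + dot r' dk := by
  simp only [dot, Pi.sub_apply, ← Finset.sum_sub_distrib, ← Finset.sum_add_distrib]
  apply Finset.sum_congr rfl
  intro i _
  ring

theorem stmt_3 {n : ℕ} (Φ : Set (Fin n → ℝ)) (hne : Φ.Nonempty) (hc : IsCompact Φ)
    (r' rt destar dk : Fin n → ℝ) (εk δ : ℝ)
    (hopt : subopt Φ r' destar = 0) (hstar : destar ∈ Φ) (hdk : dk ∈ Φ)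
    (hεk : 0 ≤ εk) (hδ : 0 ≤ δ)
    (h1 : subopt Φ rt destar > δ)
    (h2 : 0 ≤ dot (rt - r') (destar - dk))
    (h3 : εk - δ ≤ subopt Φ r' dk ∧ subopt Φ r' dk ≤ εk) :
    subopt Φ rt dk > εk := by
  have key := dot_expand rt r' destar dk
  simp only [subopt] at *
  linarith [h3.1]
end

section
/- Let Φ ⊆ ℝ^n be nonempty and compact, Δ the probability simplex in ℝ^n, subopt(r,d) := max_{d'∈Φ}⟨r,d'⟩ − ⟨r,d⟩, and R(D) := {r ∈ Δ : subopt(r,d_k) ≤ ε_k ∀k ∈ [K]} for data (d_k,ε_k) with d_k ∈ Φ. Fix d_e* ∈ Φ, δ > 0, and set R* := {r ∈ Δ : subopt(r, d_e*) = 0}. Suppose for every r̃ ∈ Δ with subopt(r̃, d_e*) > δ there exist r' ∈ R* and k ∈ [K] with ⟨r̃ − r', d_e* − d_k⟩ ≥ 0 and ε_k − δ ≤ subopt(r', d_k) ≤ ε_k. Then sup_{r ∈ R(D)} subopt(r, d_e*) ≤ δ. -/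
open scoped BigOperators

theorem stmt_4 {n K : ℕ} (Φ : Set (Fin n → ℝ)) (hne : Φ.Nonempty) (hc : IsCompact Φ)
    (dk : Fin K → Fin n → ℝ) (εk : Fin K → ℝ) (hmem : ∀ k, dk k ∈ Φ)
    (destar : Fin n → ℝ) (hstar : destar ∈ Φ) (δ : ℝ) (hδ : 0 < δ)
    (hcond : ∀ rt ∈ simplex n, subopt Φ rt destar > δ →
      ∃ r' ∈ simplex n, subopt Φ r' destar = 0 ∧
        ∃ k : Fin K, 0 ≤ dot (rt - r') (destar - dk k) ∧
          εk k - δ ≤ subopt Φ r' (dk k) ∧ subopt Φ r' (dk k) ≤ εk k) :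
    ∀ r ∈ feasible Φ dk εk, subopt Φ r destar ≤ δ := by
  intro r hr
  by_contra hcon
  push_neg at hcon
  obtain ⟨hrs, hrk⟩ := hr
  obtain ⟨r', hr's, hr'0, k, hdot, hlow, hhigh⟩ := hcond r hrs hcon
  have e1 : dot (r - r') (destar - dk k) =
      (dot r destar - dot r (dk k)) - (dot r' destar - dot r' (dk k)) := by
    simp only [dot, Pi.sub_apply, ← Finset.sum_sub_distrib]
    exact Finset.sum_congr rfl fun i _ => by ring
  have hk := hrk k
  rw [e1] at hdot
  simp only [subopt] at hcon hk hr'0 hlow hhigh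
  linarith
end

section
/- Let Φ ⊆ Δ(S×A) be a set of occupancy measures (probability vectors on a finite set), subopt(r,d) := max_{d'∈Φ}⟨r,d'⟩ − ⟨r,d⟩, and for a dataset D = {(d_k, ε_k)}_{k=1}^K with d_k ∈ Φ, ε_k ≥ 0 let R(D) := {r ∈ Δ(S×A) : subopt(r,d_k) ≤ ε_k ∀k}. Let Z := ⋃_k supp(d_k), let (d', ε') be a new pair with d' ∈ Φ, and suppose the new-mass fraction α := ∑_{(s,a)∉Z} d'(s,a) satisfies α > ε'·|Z|. Then R(D ∪ {(d',ε')}) is a strict subset of R(D). -/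
open scoped BigOperators

noncomputable def suppUnion {n K : ℕ} (dk : Fin K → Fin n → ℝ) : Finset (Fin n) :=
  Finset.univ.filter (fun i => ∃ k, dk k i ≠ 0)

/-!
The witness is the reward `uniformOn Z`, uniform on the union `Z` of the supports of the `dk k`.
Every occupancy measure collects reward at most `1 / |Z|` from it, and each `dk k` collects
exactly that much, so it is optimal for all the old constraints. Its suboptimality at `d'` is the
mass `α` that `d'` puts outside `Z`, divided by `|Z|`, which exceeds `ε'`.
-/

open Finset

theorem feasible_snoc {n K : ℕ} (Φ : Set (Fin n → ℝ)) (dk : Fin K → Fin n → ℝ)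
    (εk : Fin K → ℝ) (d' : Fin n → ℝ) (ε' : ℝ) :
    feasible Φ (Fin.snoc dk d' : Fin (K + 1) → Fin n → ℝ) (Fin.snoc εk ε') =
      feasible Φ dk εk ∩ {r | subopt Φ r d' ≤ ε'} := by
  ext r
  simp only [feasible, Fin.forall_fin_succ', Fin.snoc_castSucc, Fin.snoc_last, Set.mem_inter_iff,
    Set.mem_sep_iff]
  tauto

theorem apply_eq_zero_of_notMem_suppUnion {n K : ℕ} {dk : Fin K → Fin n → ℝ} {i : Fin n}
    (hi : i ∉ suppUnion dk) (k : Fin K) : dk k i = 0 := by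
  simp only [suppUnion, mem_filter, mem_univ, true_and, not_exists, not_not] at hi
  exact hi k

section UniformReward

variable {n : ℕ}

noncomputable def uniformOn (Z : Finset (Fin n)) : Fin n → ℝ := fun i =>
  if i ∈ Z then (Z.card : ℝ)⁻¹ else 0

theorem uniformOn_mem_simplex {Z : Finset (Fin n)} (hZ : Z.Nonempty) :
    uniformOn Z ∈ simplex n := by
  refine ⟨fun i => by unfold uniformOn; positivity, ?_⟩
  simp only [uniformOn, sum_ite_mem, univ_inter, sum_const, nsmul_eq_mul]
  exact mul_inv_cancel₀ (Nat.cast_ne_zero.mpr hZ.card_pos.ne')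

theorem dot_uniformOn (Z : Finset (Fin n)) (d : Fin n → ℝ) :
    dot (uniformOn Z) d = (Z.card : ℝ)⁻¹ * ∑ i ∈ Z, d i := by
  simp only [dot, uniformOn, ite_mul, zero_mul, sum_ite_mem, univ_inter, mul_sum]

theorem sum_le_one_of_mem_simplex {d : Fin n → ℝ} (hd : d ∈ simplex n) (Z : Finset (Fin n)) :
    ∑ i ∈ Z, d i ≤ 1 :=
  hd.2 ▸ sum_le_sum_of_subset_of_nonneg (subset_univ Z) fun i _ _ => hd.1 i

theorem sum_compl_eq_one_sub_of_mem_simplex {d : Fin n → ℝ} (hd : d ∈ simplex n)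
    (Z : Finset (Fin n)) : ∑ i ∈ univ \ Z, d i = 1 - ∑ i ∈ Z, d i := by
  rw [sum_sdiff_eq_sub (subset_univ Z), hd.2]

theorem sSup_dot_uniformOn {Φ : Set (Fin n → ℝ)} (hΦ : Φ ⊆ simplex n) {Z : Finset (Fin n)}
    {d₀ : Fin n → ℝ} (hd₀ : d₀ ∈ Φ) (hmass : ∑ i ∈ Z, d₀ i = 1) :
    sSup ((fun d => dot (uniformOn Z) d) '' Φ) = (Z.card : ℝ)⁻¹ := by
  refine IsGreatest.csSup_eq ⟨⟨d₀, hd₀, (dot_uniformOn Z d₀).trans (by rw [hmass, mul_one])⟩, ?_⟩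
  rintro _ ⟨d, hd, rfl⟩
  exact (dot_uniformOn Z d).trans_le
    (mul_le_of_le_one_right (by positivity) (sum_le_one_of_mem_simplex (hΦ hd) Z))

theorem subopt_uniformOn {Φ : Set (Fin n → ℝ)} (hΦ : Φ ⊆ simplex n) {Z : Finset (Fin n)}
    {d₀ : Fin n → ℝ} (hd₀ : d₀ ∈ Φ) (hmass : ∑ i ∈ Z, d₀ i = 1)
    {d : Fin n → ℝ} (hd : d ∈ Φ) :
    subopt Φ (uniformOn Z) d = (∑ i ∈ univ \ Z, d i) / Z.card := by
  rw [subopt, sSup_dot_uniformOn hΦ hd₀ hmass, dot_uniformOn,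
    sum_compl_eq_one_sub_of_mem_simplex (hΦ hd)]
  ring

end UniformReward

theorem stmt_6_general {n K : ℕ} (hK : 0 < K) (Φ : Set (Fin n → ℝ)) (hΦ : Φ ⊆ simplex n)
    (dk : Fin K → Fin n → ℝ) (εk : Fin K → ℝ)
    (hmem : ∀ k, dk k ∈ Φ) (hε : ∀ k, 0 ≤ εk k)
    (d' : Fin n → ℝ) (ε' : ℝ) (hd' : d' ∈ Φ)
    (hα : (∑ i ∈ Finset.univ \ suppUnion dk, d' i) > ε' * (suppUnion dk).card) :
    feasible Φ (Fin.snoc dk d' : Fin (K + 1) → Fin n → ℝ) (Fin.snoc εk ε')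
      ⊂ feasible Φ dk εk := by
  set Z := suppUnion dk
  have hout (k : Fin K) : ∑ i ∈ univ \ Z, dk k i = 0 :=
    sum_eq_zero fun i hi => apply_eq_zero_of_notMem_suppUnion (mem_sdiff.mp hi).2 k
  have hmass (k : Fin K) : ∑ i ∈ Z, dk k i = 1 := by
    linarith [hout k, sum_compl_eq_one_sub_of_mem_simplex (hΦ (hmem k)) Z]
  let k₀ : Fin K := ⟨0, hK⟩
  have hZ : Z.Nonempty := nonempty_of_sum_ne_zero (by rw [hmass k₀]; exact one_ne_zero)
  rw [feasible_snoc, Set.inter_ssubset_left_iff, Set.not_subset]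
  refine ⟨uniformOn Z, ⟨uniformOn_mem_simplex hZ, fun k => ?_⟩, ?_⟩
  · rw [subopt_uniformOn hΦ (hmem k₀) (hmass k₀) (hmem k), hout, zero_div]
    exact hε k
  · rw [Set.mem_ofPred_eq, subopt_uniformOn hΦ (hmem k₀) (hmass k₀) hd', not_le,
      lt_div_iff₀ (by exact_mod_cast hZ.card_pos)]
    exact hα

theorem stmt_6 {n K : ℕ} (hK : 0 < K) (Φ : Set (Fin n → ℝ)) (hΦ : Φ ⊆ simplex n)
    (dk : Fin K → Fin n → ℝ) (εk : Fin K → ℝ)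
    (hmem : ∀ k, dk k ∈ Φ) (hε : ∀ k, 0 ≤ εk k)
    (d' : Fin n → ℝ) (ε' : ℝ) (hd' : d' ∈ Φ) (hε' : 0 ≤ ε')
    (hα : (∑ i ∈ Finset.univ \ suppUnion dk, d' i) > ε' * (suppUnion dk).card) :
    feasible Φ (Fin.snoc dk d' : Fin (K + 1) → Fin n → ℝ) (Fin.snoc εk ε')
      ⊂ feasible Φ dk εk :=
  stmt_6_general hK Φ hΦ dk εk hmem hε d' ε' hd' hα
end

section
/- Let M be a real |S|×n matrix, μ₀ ∈ ℝ^{|S|}, γ ∈ [0,1), and Φ := {d ∈ ℝ^n : d ≥ 0, M d = (1−γ)μ₀} be nonempty and bounded. Let l ≥ 0 be a vector with l(i) ≥ δ for all i in an index set I, and suppose r := Mᵀv − l for some v ∈ ℝ^{|S|}. If d_e ∈ Φ satisfies (1−γ)⟨μ₀,v⟩ − ⟨r, d_e⟩ ≤ ε, then for every d ∈ Φ, max_{d'∈Φ}⟨r,d'⟩ − ⟨r,d⟩ ≥ δ·∑_{i∈I} d(i) − ε. -/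
open scoped BigOperators

/-- Occupancy polytope: d ≥ 0 and M d = (1 − γ) μ₀. -/
def occupancy {m n : ℕ} (M : Matrix (Fin m) (Fin n) ℝ) (μ0 : Fin m → ℝ) (γ : ℝ) :
    Set (Fin n → ℝ) :=
  {d | (∀ i, 0 ≤ d i) ∧ M.mulVec d = (1 - γ) • μ0}

/-! On Φ the flow constraint `M d = (1 - γ) μ₀` turns `⟨Mᵀ v - l, d⟩` into
`(1 - γ) ⟨μ₀, v⟩ - ⟨l, d⟩`, so the hypothesis on `d_e` says `⟨l, d_e⟩ ≤ ε`. Comparing with the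
feasible point `d_e`, the gap of `d` is at least `⟨l, d⟩ - ⟨l, d_e⟩ ≥ δ ∑_{i ∈ I} d i - ε`;
boundedness of Φ makes the supremum finite, so that it dominates `⟨r, d_e⟩`. -/

open Matrix

lemma dot_eq_dotProduct {n : ℕ} (r d : Fin n → ℝ) : dot r d = r ⬝ᵥ d := rfl

lemma continuous_dot {n : ℕ} (r : Fin n → ℝ) : Continuous (dot r) := by
  unfold dot; fun_prop

lemma dot_transpose_mulVec {m n : ℕ} (M : Matrix (Fin m) (Fin n) ℝ) (v : Fin m → ℝ)
    (x : Fin n → ℝ) : dot (Mᵀ *ᵥ v) x = dot v (M *ᵥ x) := by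
  simp only [dot_eq_dotProduct, mulVec_transpose, dotProduct_mulVec]

lemma dot_sub_of_mulVec_eq {m n : ℕ} {M : Matrix (Fin m) (Fin n) ℝ} {x : Fin n → ℝ}
    {c : ℝ} {μ0 : Fin m → ℝ} (hx : M *ᵥ x = c • μ0) (v : Fin m → ℝ) (l : Fin n → ℝ) :
    dot (Mᵀ *ᵥ v - l) x = c * dot μ0 v - dot l x := by
  calc dot (Mᵀ *ᵥ v - l) x = dot v (M *ᵥ x) - dot l x := by
        rw [← dot_transpose_mulVec]; exact sub_dotProduct _ _ _
    _ = c * dot μ0 v - dot l x := by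
        rw [hx, dot_eq_dotProduct, dotProduct_smul, smul_eq_mul, dotProduct_comm]; rfl

lemma mul_sum_le_dot {n : ℕ} {l d : Fin n → ℝ} {δ : ℝ} {I : Finset (Fin n)}
    (hl : ∀ i, 0 ≤ l i) (hd : ∀ i, 0 ≤ d i) (hI : ∀ i ∈ I, δ ≤ l i) :
    δ * ∑ i ∈ I, d i ≤ dot l d :=
  calc δ * ∑ i ∈ I, d i = ∑ i ∈ I, δ * d i := Finset.mul_sum _ _ _
    _ ≤ ∑ i ∈ I, l i * d i := Finset.sum_le_sum fun i hi =>
        mul_le_mul_of_nonneg_right (hI i hi) (hd i)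
    _ ≤ ∑ i, l i * d i := Finset.sum_le_sum_of_subset_of_nonneg (Finset.subset_univ I)
        fun i _ _ => mul_nonneg (hl i) (hd i)

lemma bddAbove_dot_image {n : ℕ} (r : Fin n → ℝ) {s : Set (Fin n → ℝ)}
    (hs : Bornology.IsBounded s) : BddAbove (dot r '' s) :=
  (hs.isCompact_closure.image (continuous_dot r)).bddAbove.mono
    (Set.image_mono subset_closure)

theorem stmt_9_general {m n : ℕ} (M : Matrix (Fin m) (Fin n) ℝ) (μ0 : Fin m → ℝ) (γ : ℝ)
    (hbd : Bornology.IsBounded (occupancy M μ0 γ))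
    (l : Fin n → ℝ) (hl : ∀ i, 0 ≤ l i) (δ : ℝ) (I : Finset (Fin n))
    (hI : ∀ i ∈ I, δ ≤ l i)
    (v : Fin m → ℝ) (r : Fin n → ℝ) (hr : r = M.transpose.mulVec v - l)
    (de : Fin n → ℝ) (hde : de ∈ occupancy M μ0 γ) (ε : ℝ)
    (hfeas : (1 - γ) * dot μ0 v - dot r de ≤ ε) :
    ∀ d ∈ occupancy M μ0 γ,
      sSup ((fun dp => dot r dp) '' occupancy M μ0 γ) - dot r d
        ≥ δ * (∑ i ∈ I, d i) - ε := by
  rintro d ⟨hd0, hdM⟩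
  subst hr
  have hde_le_sup : dot (Mᵀ *ᵥ v - l) de ≤ sSup (dot (Mᵀ *ᵥ v - l) '' occupancy M μ0 γ) :=
    le_csSup (bddAbove_dot_image _ hbd) (Set.mem_image_of_mem _ hde)
  have hd_val := dot_sub_of_mulVec_eq hdM v l
  have hde_val := dot_sub_of_mulVec_eq hde.2 v l
  have hld := mul_sum_le_dot hl hd0 hI
  linarith

theorem stmt_9 {m n : ℕ} (M : Matrix (Fin m) (Fin n) ℝ) (μ0 : Fin m → ℝ) (γ : ℝ)
    (hγ : 0 ≤ γ ∧ γ < 1)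
    (hne : (occupancy M μ0 γ).Nonempty) (hbd : Bornology.IsBounded (occupancy M μ0 γ))
    (l : Fin n → ℝ) (hl : ∀ i, 0 ≤ l i) (δ : ℝ) (I : Finset (Fin n))
    (hI : ∀ i ∈ I, δ ≤ l i)
    (v : Fin m → ℝ) (r : Fin n → ℝ) (hr : r = M.transpose.mulVec v - l)
    (de : Fin n → ℝ) (hde : de ∈ occupancy M μ0 γ) (ε : ℝ)
    (hfeas : (1 - γ) * dot μ0 v - dot r de ≤ ε) :
    ∀ d ∈ occupancy M μ0 γ,
      sSup ((fun dp => dot r dp) '' occupancy M μ0 γ) - dot r d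
        ≥ δ * (∑ i ∈ I, d i) - ε :=
  stmt_9_general M μ0 γ hbd l hl δ I hI v r hr de hde ε hfeas
end

section
/- Let σ(x) := 1/(1+e^{−x}) and fix β_g, β_b > 0, δ ∈ (0, 1/4], C ∈ (0,1), and an integer m ≥ β_g σ(β_g C) / (β_b σ(−β_b C)). Define L(Δ) := (1−δ)·log σ(β_g Δ) + δ·log σ(−β_g Δ) + m·log σ(−β_b Δ) for Δ ∈ [−1,1]. Then L is concave on [−1,1], L'(−C) ≤ 0, and consequently every maximizer Δ* of L over [−1,1] satisfies Δ* ≤ −C. -/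
noncomputable def sigm (x : ℝ) : ℝ := (1 + Real.exp (-x))⁻¹

/-! Since `(log σ)' = σ(-·)`, every term of `L'` is a nonnegative multiple of `σ(-βΔ)` or of
`-σ(βΔ)`, so `L'` is strictly decreasing and `L` is strictly concave; the choice of `m` makes
`L'(-C) ≤ 0`. Hence `L` is strictly decreasing on `[-C, ∞)`, and no maximizer lies to the right
of `-C`. -/

open Real Set

lemma sigm_eq_sigmoid : sigm = sigmoid := rfl

lemma hasDerivAt_log_sigmoid (x : ℝ) :
    HasDerivAt (fun y => log (sigmoid y)) (sigmoid (-x)) x := by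
  convert (hasDerivAt_sigmoid x).log (sigmoid_pos x).ne' using 1
  rw [sigmoid_neg]
  field_simp [(sigmoid_pos x).ne']

lemma hasDerivAt_log_sigmoid_mul (a x : ℝ) :
    HasDerivAt (fun y => log (sigmoid (a * y))) (a * sigmoid (-(a * x))) x :=
  ((hasDerivAt_log_sigmoid (a * x)).comp x ((hasDerivAt_id x).const_mul a)).congr_deriv
    (by ring)

lemma hasDerivAt_log_sigmoid_neg_mul (a x : ℝ) :
    HasDerivAt (fun y => log (sigmoid (-(a * y)))) (-(a * sigmoid (a * x))) x := by
  simpa only [neg_mul, neg_neg] using hasDerivAt_log_sigmoid_mul (-a) x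

noncomputable def objectiveDeriv (βg βb δ m x : ℝ) : ℝ :=
  (1 - δ) * (βg * sigmoid (-(βg * x))) - δ * (βg * sigmoid (βg * x))
    - m * (βb * sigmoid (βb * x))

lemma hasDerivAt_objective (βg βb δ m x : ℝ) :
    HasDerivAt (fun Δ => (1 - δ) * log (sigmoid (βg * Δ)) + δ * log (sigmoid (-(βg * Δ)))
      + m * log (sigmoid (-(βb * Δ)))) (objectiveDeriv βg βb δ m x) x :=
  ((((hasDerivAt_log_sigmoid_mul βg x).const_mul (1 - δ)).add
    ((hasDerivAt_log_sigmoid_neg_mul βg x).const_mul δ)).add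
    ((hasDerivAt_log_sigmoid_neg_mul βb x).const_mul m)).congr_deriv
    (by unfold objectiveDeriv; ring)

lemma strictAnti_objectiveDeriv {βg βb δ m : ℝ} (hβg : 0 < βg) (hβb : 0 ≤ βb) (hδ0 : 0 < δ)
    (hδ1 : δ ≤ 1) (hm : 0 ≤ m) : StrictAnti (objectiveDeriv βg βb δ m) := by
  intro x y hxy
  have hgood : (1 - δ) * (βg * sigmoid (-(βg * y))) ≤ (1 - δ) * (βg * sigmoid (-(βg * x))) :=
    mul_le_mul_of_nonneg_left (mul_le_mul_of_nonneg_left (sigmoid_le (by nlinarith)) hβg.le)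
      (by linarith)
  have hflip : δ * (βg * sigmoid (βg * x)) < δ * (βg * sigmoid (βg * y)) :=
    mul_lt_mul_of_pos_left (mul_lt_mul_of_pos_left (sigmoid_lt (by nlinarith)) hβg) hδ0
  have hbad : m * (βb * sigmoid (βb * x)) ≤ m * (βb * sigmoid (βb * y)) :=
    mul_le_mul_of_nonneg_left (mul_le_mul_of_nonneg_left (sigmoid_le (by nlinarith)) hβb) hm
  unfold objectiveDeriv
  linarith

lemma objectiveDeriv_neg_nonpos {βg βb δ m C : ℝ} (hβg : 0 ≤ βg) (hδ0 : 0 ≤ δ)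
    (hm : βg * sigmoid (βg * C) ≤ m * (βb * sigmoid (-(βb * C)))) :
    objectiveDeriv βg βb δ m (-C) ≤ 0 := by
  have hg := mul_nonneg hδ0 (mul_nonneg hβg (sigmoid_nonneg (βg * C)))
  have hg' := mul_nonneg hδ0 (mul_nonneg hβg (sigmoid_nonneg (-(βg * C))))
  simp only [objectiveDeriv, mul_neg, neg_neg]
  linarith

lemma le_of_isMaxOn_of_strictAnti_deriv {f f' : ℝ → ℝ} {s : Set ℝ} {a x : ℝ}
    (hf : ∀ y, HasDerivAt f (f' y) y) (hf' : StrictAnti f') (ha : f' a ≤ 0) (has : a ∈ s)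
    (hx : IsMaxOn f s x) : x ≤ a := by
  by_contra! hax
  have hdecr : StrictAntiOn f (Ici a) := by
    refine strictAntiOn_of_deriv_neg (convex_Ici a)
      (fun y _ => (hf y).continuousAt.continuousWithinAt) fun y hy => ?_
    rw [interior_Ici] at hy
    rw [(hf y).deriv]
    exact (hf' hy).trans_le ha
  exact (hdecr self_mem_Ici hax.le hax).not_ge (hx has)

theorem stmt_14 (βg βb δ C : ℝ) (m : ℕ)
    (hβg : 0 < βg) (hβb : 0 < βb) (hδ : 0 < δ ∧ δ ≤ 1 / 4) (hC : 0 < C ∧ C < 1)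
    (hm : βg * sigm (βg * C) / (βb * sigm (-(βb * C))) ≤ (m : ℝ))
    (L : ℝ → ℝ)
    (hL : L = fun Δ => (1 - δ) * Real.log (sigm (βg * Δ))
        + δ * Real.log (sigm (-(βg * Δ))) + (m : ℝ) * Real.log (sigm (-(βb * Δ)))) :
    ConcaveOn ℝ (Set.Icc (-1 : ℝ) 1) L ∧
    deriv L (-C) ≤ 0 ∧
    ∀ Δstar ∈ Set.Icc (-1 : ℝ) 1,
      IsMaxOn L (Set.Icc (-1 : ℝ) 1) Δstar → Δstar ≤ -C := by
  obtain ⟨hδ0, hδ4⟩ := hδ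
  rw [sigm_eq_sigmoid] at hm hL
  have hL' : ∀ x, HasDerivAt L (objectiveDeriv βg βb δ m x) x :=
    hL ▸ hasDerivAt_objective βg βb δ m
  have hderiv : deriv L = objectiveDeriv βg βb δ m := funext fun x => (hL' x).deriv
  have hanti : StrictAnti (objectiveDeriv βg βb δ m) :=
    strictAnti_objectiveDeriv hβg hβb.le hδ0 (by linarith) m.cast_nonneg
  have hC' : objectiveDeriv βg βb δ m (-C) ≤ 0 :=
    objectiveDeriv_neg_nonpos hβg.le hδ0.le ((div_le_iff₀ (mul_pos hβb (sigmoid_pos _))).1 hm)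
  have hcont : Continuous L := continuous_iff_continuousAt.2 fun x => (hL' x).continuousAt
  have hCmem : -C ∈ Icc (-1 : ℝ) 1 := ⟨by linarith, by linarith⟩
  refine ⟨?_, hderiv ▸ hC', fun x _ hx =>
    le_of_isMaxOn_of_strictAnti_deriv hL' hanti hC' hCmem hx⟩
  exact ((hderiv ▸ hanti).strictConcaveOn_univ_of_deriv hcont).concaveOn.subset (subset_univ _)
    (convex_Icc _ _)
end
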